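/- Assume Condition (i) holds, and let φ be an entire solution of the radial translating-soliton ODE on (R,∞). Then φ(r) − (c/(n−1))·ξ(r)/ξ'(r) → 0 as r → ∞. -/

import Mathlib

open Filter Set

private lemma ineqA {g m : ℝ} (hg : 0 < g) (hm : 0 ≤ m) :
    min 1 m * max 1 g * g ≤ 1 + m * g ^ 2 := by
  have h2 : 0 ≤ min 1 m := le_min zero_le_one hm
  rcases le_total g 1 with h | h
  · rw [max_eq_left h]
    have h1 : min 1 m ≤ 1 := min_le_left _ _
    nlinarith [mul_nonneg hm (sq_nonneg g)]
  · rw [max_eq_right h]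
    have h1 : min 1 m ≤ m := min_le_right _ _
    nlinarith [mul_nonneg hm (mul_nonneg hg.le (sub_nonneg.2 h))]

private lemma ineqB {g m : ℝ} (hg : 0 < g) (hm : 0 ≤ m) :
    min 1 m * max 1 g ≤ 1 + m * g ^ 2 := by
  have h2 : 0 ≤ min 1 m := le_min zero_le_one hm
  rcases le_total g 1 with h | h
  · rw [max_eq_left h]
    have h1 : min 1 m ≤ 1 := min_le_left _ _
    nlinarith [mul_nonneg hm (sq_nonneg g)]
  · rw [max_eq_right h]
    have h1 : min 1 m ≤ m := min_le_right _ _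
    nlinarith [mul_nonneg hm (mul_nonneg hg.le (sub_nonneg.2 h))]

private lemma mvt_le (f f' : ℝ → ℝ) {a b C : ℝ} (hab : a ≤ b)
    (hd : ∀ r ∈ Icc a b, HasDerivAt f (f' r) r)
    (hC : ∀ r ∈ Ioo a b, f' r ≤ C) :
    f b - f a ≤ C * (b - a) := by
  have hcont : ContinuousOn f (Icc a b) := fun r hr =>
    (hd r hr).continuousAt.continuousWithinAt
  have hdiff : DifferentiableOn ℝ f (interior (Icc a b)) := by
    rw [interior_Icc]
    exact fun r hr => ((hd r (Ioo_subset_Icc_self hr)).differentiableAt).differentiableWithinAt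
  have hbound : ∀ r ∈ interior (Icc a b), deriv f r ≤ C := by
    rw [interior_Icc]
    intro r hr
    rw [(hd r (Ioo_subset_Icc_self hr)).deriv]
    exact hC r hr
  exact (convex_Icc a b).image_sub_le_mul_sub_of_deriv_le hcont hdiff hbound a
    (left_mem_Icc.2 hab) b (right_mem_Icc.2 hab) hab

private lemma mvt_ge (f f' : ℝ → ℝ) {a b C : ℝ} (hab : a ≤ b)
    (hd : ∀ r ∈ Icc a b, HasDerivAt f (f' r) r)
    (hC : ∀ r ∈ Ioo a b, C ≤ f' r) :
    C * (b - a) ≤ f b - f a := by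
  have hcont : ContinuousOn f (Icc a b) := fun r hr =>
    (hd r hr).continuousAt.continuousWithinAt
  have hdiff : DifferentiableOn ℝ f (interior (Icc a b)) := by
    rw [interior_Icc]
    exact fun r hr => ((hd r (Ioo_subset_Icc_self hr)).differentiableAt).differentiableWithinAt
  have hbound : ∀ r ∈ interior (Icc a b), C ≤ deriv f r := by
    rw [interior_Icc]
    intro r hr
    rw [(hd r (Ioo_subset_Icc_self hr)).deriv]
    exact hC r hr
  exact (convex_Icc a b).mul_sub_le_image_sub_of_le_deriv hcont hdiff hbound a
    (left_mem_Icc.2 hab) b (right_mem_Icc.2 hab) hab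

private lemma barrier_stay (f f' : ℝ → ℝ) {a ε : ℝ}
    (hd : ∀ r, a ≤ r → HasDerivAt f (f' r) r)
    (h0 : f a ≤ ε)
    (htouch : ∀ r, a ≤ r → f r = ε → f' r < 0) :
    ∀ b, a ≤ b → f b ≤ ε := by
  intro b hab
  by_contra hfb
  push_neg at hfb
  set S : Set ℝ := {r | r ∈ Icc a b ∧ f r ≤ ε} with hSdef
  have hSne : S.Nonempty := ⟨a, ⟨left_mem_Icc.2 hab, h0⟩⟩
  have hSbdd : BddAbove S := ⟨b, fun x hx => hx.1.2⟩
  set s := sSup S with hsdef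
  have hsa : a ≤ s := le_csSup hSbdd ⟨left_mem_Icc.2 hab, h0⟩
  have hsb : s ≤ b := csSup_le hSne fun x hx => hx.1.2
  have hcont : ContinuousAt f s := (hd s hsa).continuousAt
  have hfs_le : f s ≤ ε := by
    by_contra hgt
    push_neg at hgt
    have hev : ∀ᶠ t in nhds s, ε < f t := hcont.tendsto.eventually (eventually_gt_nhds hgt)
    rw [Metric.eventually_nhds_iff] at hev
    obtain ⟨η, hη, hball⟩ := hev
    obtain ⟨x, hxS, hxlt⟩ := exists_lt_of_lt_csSup hSne (by linarith : s - η < s)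
    have hxle : x ≤ s := le_csSup hSbdd hxS
    have : ε < f x := hball (by rw [Real.dist_eq]; rw [abs_lt]; constructor <;> linarith)
    exact absurd hxS.2 (not_le.2 this)
  have hsb' : s < b := lt_of_le_of_ne hsb fun h => by rw [h] at hfs_le; linarith
  have hright : ∀ t, s < t → t ≤ b → ε < f t := by
    intro t hst htb
    by_contra hle
    push_neg at hle
    have htS : t ∈ S := ⟨⟨le_trans hsa hst.le, htb⟩, hle⟩
    exact absurd (le_csSup hSbdd htS) (not_le.2 hst)
  have hfs_ge : ε ≤ f s := by
    have h2 : Tendsto f (nhdsWithin s (Ioi s)) (nhds (f s)) :=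
      hcont.tendsto.mono_left nhdsWithin_le_nhds
    refine ge_of_tendsto h2 ?_
    filter_upwards [Ioo_mem_nhdsGT_of_mem (⟨le_refl s, hsb'⟩ : s ∈ Ico s b)] with t ht
    exact (hright t ht.1 ht.2.le).le
  have hfse : f s = ε := le_antisymm hfs_le hfs_ge
  have hneg := htouch s hsa hfse
  have hslope : Tendsto (slope f s) (nhdsWithin s (Ioi s)) (nhds (f' s)) := by
    have h1 := (hasDerivAt_iff_tendsto_slope).1 (hd s hsa)
    exact h1.mono_left (nhdsWithin_mono s fun t ht => ne_of_gt ht)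
  have hge : 0 ≤ f' s := by
    refine ge_of_tendsto hslope ?_
    filter_upwards [Ioo_mem_nhdsGT_of_mem (⟨le_refl s, hsb'⟩ : s ∈ Ico s b)] with t ht
    rw [slope_def_field]
    have h1 : ε < f t := hright t ht.1 ht.2.le
    apply div_nonneg (by rw [hfse]; linarith) (by linarith [ht.1])
  linarith

private lemma escape_below (f f' : ℝ → ℝ) {a ε γ : ℝ} (hγ : 0 < γ)
    (hd : ∀ r, a ≤ r → HasDerivAt f (f' r) r)
    (hdec : ∀ r, a ≤ r → ε ≤ f r → f' r ≤ -γ) :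
    ∃ b, a ≤ b ∧ f b ≤ ε := by
  by_contra h
  push_neg at h
  have hfa : ε < f a := h a le_rfl
  set b := a + (f a - ε) / γ with hbdef
  have hab : a ≤ b := by
    have : 0 ≤ (f a - ε) / γ := div_nonneg (by linarith) hγ.le
    rw [hbdef]; linarith
  have hmvt := mvt_le f f' hab
    (fun r hr => hd r hr.1)
    (fun r hr => hdec r hr.1.le (h r hr.1.le).le)
  have hfb : ε < f b := h b hab
  have : -γ * (b - a) = -(f a - ε) := by
    rw [hbdef]
    field_simp
    ring
  rw [this] at hmvt
  linarith

private lemma eventually_le_of (f f' : ℝ → ℝ) {a ε γ : ℝ} (hγ : 0 < γ)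
    (hd : ∀ r, a ≤ r → HasDerivAt f (f' r) r)
    (hdec : ∀ r, a ≤ r → ε ≤ f r → f' r ≤ -γ) :
    ∃ b, a ≤ b ∧ ∀ r, b ≤ r → f r ≤ ε := by
  obtain ⟨b, hab, hfb⟩ := escape_below f f' hγ hd hdec
  refine ⟨b, hab, barrier_stay f f' (fun r hr => hd r (hab.trans hr)) hfb ?_⟩
  intro r hr hfr
  have := hdec r (hab.trans hr) hfr.ge
  linarith

private lemma riccati_blowup (f f' : ℝ → ℝ) {a c2 : ℝ} (hc : 0 < c2)
    (hd : ∀ r, a ≤ r → HasDerivAt f (f' r) r)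
    (hgrow : ∀ r, a ≤ r → c2 * (1 + f r ^ 2) ≤ f' r) : False := by
  set b := a + Real.pi / c2 with hbdef
  have hab : a ≤ b := by
    have : 0 < Real.pi / c2 := div_pos Real.pi_pos hc
    rw [hbdef]; linarith
  have hda : ∀ r, a ≤ r →
      HasDerivAt (fun x => Real.arctan (f x)) (1 / (1 + f r ^ 2) * f' r) r :=
    fun r hr => (hd r hr).arctan
  have hmvt := mvt_ge (C := c2) (fun x => Real.arctan (f x))
    (fun r => 1 / (1 + f r ^ 2) * f' r) hab
    (fun r hr => hda r hr.1)
    (fun r hr => by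
      have h1 : (0:ℝ) < 1 + f r ^ 2 := by positivity
      show c2 ≤ 1 / (1 + f r ^ 2) * f' r
      rw [div_mul_eq_mul_div, one_mul, le_div_iff₀ h1]
      exact hgrow r hr.1.le)
  have hval : c2 * (b - a) = Real.pi := by
    rw [hbdef]
    field_simp
    ring
  rw [hval] at hmvt
  have h1 := Real.arctan_lt_pi_div_two (f b)
  have h2 := Real.neg_pi_div_two_lt_arctan (f a)
  linarith

section Steps

variable {N k ε g G' φ : ℝ}

private lemma step_common (hN : 1 ≤ N) (hk : 0 < k) (hε : 0 < ε) (hg : 0 < g)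
    (hG : |G'| ≤ (N * min 1 (k^2/4) * min ε 1 / (4*(k+1))) * max 1 g) :
    k * |G'| ≤ (N * min 1 (k^2/4) * min ε 1 / 4) * max 1 g := by
  have hm₁0 : 0 < min 1 (k^2/4) := lt_min one_pos (by positivity)
  have hmε0 : 0 < min ε 1 := lt_min hε one_pos
  have hM1 : (1:ℝ) ≤ max 1 g := le_max_left _ _
  have hkd : k * (N * min 1 (k^2/4) * min ε 1 / (4*(k+1))) ≤ N * min 1 (k^2/4) * min ε 1 / 4 := by
    rw [mul_div_assoc', div_le_div_iff₀ (by positivity) (by positivity)]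
    nlinarith [mul_pos (mul_pos (by linarith : (0:ℝ) < N) hm₁0) hmε0]
  calc k * |G'| ≤ k * ((N * min 1 (k^2/4) * min ε 1 / (4*(k+1))) * max 1 g) := by
        exact mul_le_mul_of_nonneg_left hG hk.le
    _ ≤ (N * min 1 (k^2/4) * min ε 1 / 4) * max 1 g := by
        rw [← mul_assoc]
        exact mul_le_mul_of_nonneg_right hkd (by positivity)

private lemma step_upper (hN : 1 ≤ N) (hk : 0 < k) (hε : 0 < ε) (hg : 0 < g)
    (hG : |G'| ≤ (N * min 1 (k^2/4) * min ε 1 / (4*(k+1))) * max 1 g)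
    (hu : ε ≤ φ - k * g) :
    N * (1 + φ^2) * (k * g - φ) / g - k * G' ≤ -(N * min 1 (k^2/4) * min ε 1 / 2) := by
  set m₁ := min 1 (k^2/4) with hm₁def
  set mε := min ε 1 with hmεdef
  set M := max 1 g with hMdef
  have hm₁0 : 0 < m₁ := lt_min one_pos (by positivity)
  have hmε0 : 0 < mε := lt_min hε one_pos
  have hmεε : mε ≤ ε := min_le_left _ _
  have hM1 : (1:ℝ) ≤ M := le_max_left _ _
  have hA : m₁ * M * g ≤ 1 + k^2/4 * g ^ 2 := ineqA hg (by positivity)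
  have hkg : 0 ≤ k * g := by positivity
  have hφkg : k * g ≤ φ := by linarith
  have h2 : (1 + k^2/4 * g^2) * ε ≤ (1 + φ^2) * (φ - k * g) := by
    nlinarith [mul_nonneg (by positivity : (0:ℝ) ≤ 1 + φ^2) (by linarith : 0 ≤ φ - k*g - ε),
      mul_nonneg (by nlinarith : (0:ℝ) ≤ φ^2 - k^2/4 * g^2) hε.le]
  have h4 : ε * (m₁ * M) ≤ (1 + φ^2) * (φ - k * g) / g := by
    rw [le_div_iff₀ hg]
    nlinarith [mul_le_mul_of_nonneg_left hA hε.le]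
  have hG2 := step_common hN hk hε hg hG
  have hG3 : -(N * m₁ * mε / 4 * M) ≤ k * G' := by
    have := neg_abs_le G'
    nlinarith [hG2]
  have hrw : N * (1 + φ^2) * (k * g - φ) / g = -(N * ((1 + φ^2) * (φ - k * g) / g)) := by
    ring
  rw [hrw]
  have h5 : N * (mε * (m₁ * M)) ≤ N * ((1 + φ^2) * (φ - k * g) / g) := by
    apply mul_le_mul_of_nonneg_left _ (by linarith : (0:ℝ) ≤ N)
    calc mε * (m₁ * M) ≤ ε * (m₁ * M) := by
          exact mul_le_mul_of_nonneg_right hmεε (by positivity)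
      _ ≤ _ := h4
  nlinarith [mul_nonneg (mul_nonneg (mul_nonneg (by linarith : (0:ℝ) ≤ N) hm₁0.le) hmε0.le)
    (by linarith : (0:ℝ) ≤ M - 1),
    mul_pos (mul_pos (by linarith : (0:ℝ) < N) hm₁0) hmε0]

private lemma step_lower (hN : 1 ≤ N) (hk : 0 < k) (hε : 0 < ε) (hg : 0 < g)
    (hG : |G'| ≤ (N * min 1 (k^2/4) * min ε 1 / (4*(k+1))) * max 1 g)
    (hhalf : k * g / 2 ≤ φ)
    (hl : ε ≤ k * g - φ) :
    k * G' - N * (1 + φ^2) * (k * g - φ) / g ≤ -(N * min 1 (k^2/4) * min ε 1 / 2) := by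
  set m₁ := min 1 (k^2/4) with hm₁def
  set mε := min ε 1 with hmεdef
  set M := max 1 g with hMdef
  have hm₁0 : 0 < m₁ := lt_min one_pos (by positivity)
  have hmε0 : 0 < mε := lt_min hε one_pos
  have hmεε : mε ≤ ε := min_le_left _ _
  have hM1 : (1:ℝ) ≤ M := le_max_left _ _
  have hA : m₁ * M * g ≤ 1 + k^2/4 * g ^ 2 := ineqA hg (by positivity)
  have hkg : 0 ≤ k * g := by positivity
  have hφ0 : 0 ≤ φ := by linarith
  have h2 : (1 + k^2/4 * g^2) * ε ≤ (1 + φ^2) * (k * g - φ) := by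
    nlinarith [mul_nonneg (by positivity : (0:ℝ) ≤ 1 + φ^2) (by linarith : 0 ≤ k*g - φ - ε),
      mul_nonneg (by nlinarith : (0:ℝ) ≤ φ^2 - k^2/4 * g^2) hε.le]
  have h4 : ε * (m₁ * M) ≤ (1 + φ^2) * (k * g - φ) / g := by
    rw [le_div_iff₀ hg]
    nlinarith [mul_le_mul_of_nonneg_left hA hε.le]
  have hG2 := step_common hN hk hε hg hG
  have hG3 : k * G' ≤ N * m₁ * mε / 4 * M := by
    have := le_abs_self G'
    nlinarith [hG2]
  have h5 : N * (mε * (m₁ * M)) ≤ N * ((1 + φ^2) * (k * g - φ) / g) := by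
    apply mul_le_mul_of_nonneg_left _ (by linarith : (0:ℝ) ≤ N)
    calc mε * (m₁ * M) ≤ ε * (m₁ * M) := by
          exact mul_le_mul_of_nonneg_right hmεε (by positivity)
      _ ≤ _ := h4
  have hEq : N * (1 + φ^2) * (k*g - φ)/g = N*((1+φ^2)*(k*g-φ)/g) := by ring
  rw [hEq]
  have hXM : N * m₁ * mε * M ≤ N * ((1+φ^2)*(k*g-φ)/g) := by
    calc N * m₁ * mε * M = N * (mε * (m₁ * M)) := by ring
      _ ≤ _ := h5
  nlinarith [mul_nonneg (mul_nonneg (mul_nonneg (by linarith : (0:ℝ) ≤ N) hm₁0.le) hmε0.le)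
    (by linarith : (0:ℝ) ≤ M - 1),
    mul_pos (mul_pos (by linarith : (0:ℝ) < N) hm₁0) hmε0]

private lemma step_touch (hN : 1 ≤ N) (hk : 0 < k) (hε : 0 < ε) (hg : 0 < g)
    (hG : |G'| ≤ (N * min 1 (k^2/4) * min ε 1 / (4*(k+1))) * max 1 g)
    (hφ : φ = k * g / 2) :
    k * G' / 2 - N * (1 + φ^2) * (k * g - φ) / g < 0 := by
  set m₁ := min 1 (k^2/4) with hm₁def
  set mε := min ε 1 with hmεdef
  set M := max 1 g with hMdef
  have hm₁0 : 0 < m₁ := lt_min one_pos (by positivity)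
  have hmε0 : 0 < mε := lt_min hε one_pos
  have hmε1 : mε ≤ 1 := min_le_right _ _
  have hM1 : (1:ℝ) ≤ M := le_max_left _ _
  have hB : m₁ * M ≤ 1 + k^2/4 * g ^ 2 := ineqB hg (by positivity)
  have hDval : N * (1 + φ^2) * (k * g - φ) / g = N * k / 2 * (1 + (k*g/2)^2) := by
    rw [hφ]; field_simp; ring
  rw [hDval]
  have hG3 : k * G' ≤ k * (N * m₁ * mε / (4*(k+1))) * M := by
    have h := le_abs_self G'
    have h2 := mul_le_mul_of_nonneg_left hG hk.le
    nlinarith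
  have hlb : N * k / 2 * (m₁ * M) ≤ N * k / 2 * (1 + (k*g/2)^2) := by
    apply mul_le_mul_of_nonneg_left _ (by positivity)
    calc m₁ * M ≤ 1 + k^2/4 * g^2 := hB
      _ = 1 + (k*g/2)^2 := by ring
  have hkey : N * m₁ * mε / (4*(k+1)) < N * m₁ := by
    rw [div_lt_iff₀ (by positivity)]
    nlinarith [mul_pos (mul_pos (by linarith : (0:ℝ) < N) hm₁0) hmε0,
      mul_pos (by linarith : (0:ℝ) < N) hm₁0]
  have hstrict : k * (N * m₁ * mε / (4*(k+1))) * M < k * (N * m₁) * M := by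
    apply mul_lt_mul_of_pos_right _ (by linarith : (0:ℝ) < M)
    exact mul_lt_mul_of_pos_left hkey hk
  have hring : k * (N * m₁) * M = N * k / 2 * (m₁ * M) * 2 := by ring
  linarith

private lemma step_riccati {cc : ℝ} (hN : 1 ≤ N) (hk : 0 < k) (hg : 0 < g)
    (hcc : cc = N * k) (hφ : φ ≤ k * g / 2) :
    cc / 2 * (1 + φ^2) ≤ N * (1 + φ^2) * (k * g - φ) / g := by
  rw [le_div_iff₀ hg, hcc]
  nlinarith [mul_nonneg (mul_nonneg (by linarith : (0:ℝ) ≤ N)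
    (by positivity : (0:ℝ) ≤ 1 + φ^2)) (by linarith : 0 ≤ k*g - φ - k*g/2)]

end Steps

private lemma minmax_eq {x : ℝ} (hx : 0 < x) :
    min (max 1 (x^2)) (max x x⁻¹) = max 1 x := by
  have hxi : x * x⁻¹ = 1 := mul_inv_cancel₀ hx.ne'
  rcases le_total x 1 with h | h
  · have hx2 : x^2 ≤ 1 := by nlinarith
    have hinv : (1:ℝ) ≤ x⁻¹ := by nlinarith
    rw [max_eq_left hx2, max_eq_right (by linarith : x ≤ x⁻¹), min_eq_left hinv,
      max_eq_left h]
  · have hx2 : (1:ℝ) ≤ x^2 := by nlinarith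
    have hinv : x⁻¹ ≤ 1 := by nlinarith
    rw [max_eq_right hx2, max_eq_left (by linarith : x⁻¹ ≤ x),
      min_eq_right (by nlinarith : x ≤ x^2), max_eq_right h]

/-- Let `n ≥ 2`, `c > 0`, and let `ξ` be a warping function of a
rotationally symmetric Cartan–Hadamard manifold (`ξ 0 = 0`, `ξ' 0 = 1`, `ξ'' ≥ 0`,
hence `ξ > 0` and `ξ' ≥ 1` on `(0,∞)`).  Assume Condition (i):
`(ξ/ξ')'(r) / min{max{1, (ξ/ξ')²}, max{ξ/ξ', ξ'/ξ}} → 0` as `r → ∞`.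
Let `φ` be an entire solution on `(R,∞)` of the radial translating-soliton ODE
`φ' = (1 + φ²)(c − (n−1)(ξ'/ξ)φ)`.  Then `φ(r) − (c/(n−1))·ξ(r)/ξ'(r) → 0` as `r → ∞`. -/
theorem soliton_ode_asymptotics
    (n : ℕ) (hn : 2 ≤ n) (c : ℝ) (hc : 0 < c)
    (ξ : ℝ → ℝ) (hξ_smooth : ContDiff ℝ (⊤ : ℕ∞) ξ)
    (hξ0 : ξ 0 = 0) (hξ'0 : deriv ξ 0 = 1)
    (hξ'' : ∀ r, 0 ≤ r → 0 ≤ deriv (deriv ξ) r)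
    (hξ_pos : ∀ r, 0 < r → 0 < ξ r)
    (hξ'_ge : ∀ r, 0 < r → 1 ≤ deriv ξ r)
    (hcondi : Tendsto (fun r =>
      deriv (fun s => ξ s / deriv ξ s) r /
        min (max 1 ((ξ r / deriv ξ r)^2)) (max (ξ r / deriv ξ r) (deriv ξ r / ξ r)))
      atTop (nhds 0))
    (φ : ℝ → ℝ) (R : ℝ) (hR : 0 ≤ R)
    (hode : ∀ r, R < r →
      HasDerivAt φ ((1 + (φ r)^2) * (c - ((n : ℝ) - 1) * (deriv ξ r / ξ r) * φ r)) r) :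
    Tendsto (fun r => φ r - (c / ((n : ℝ) - 1)) * (ξ r / deriv ξ r)) atTop (nhds 0) := by
  have hn2 : (2:ℝ) ≤ (n:ℝ) := by exact_mod_cast hn
  set N : ℝ := (n:ℝ) - 1 with hNdef
  have hN1 : (1:ℝ) ≤ N := by rw [hNdef]; linarith
  have hN0 : (0:ℝ) < N := by linarith
  set k : ℝ := c / N with hkdef
  have hk : 0 < k := div_pos hc hN0
  have hcNk : c = N * k := by rw [hkdef]; field_simp
  set g : ℝ → ℝ := fun s => ξ s / deriv ξ s with hgdef
  have hsmooth' := contDiff_infty_iff_deriv.mp (hξ_smooth.of_le (by simp))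
  have hξd : Differentiable ℝ ξ := hsmooth'.1
  have hξ'd : Differentiable ℝ (deriv ξ) := hsmooth'.2.differentiable (by simp)
  have hbpos : ∀ r : ℝ, 0 < r → 0 < deriv ξ r := fun r hr =>
    lt_of_lt_of_le one_pos (hξ'_ge r hr)
  have hbne : ∀ r : ℝ, 0 < r → deriv ξ r ≠ 0 := fun r hr => (hbpos r hr).ne'
  have hgpos : ∀ r : ℝ, 0 < r → 0 < g r := fun r hr =>
    div_pos (hξ_pos r hr) (hbpos r hr)
  have hgd : ∀ r : ℝ, 0 < r → HasDerivAt g (deriv g r) r := fun r hr =>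
    ((hξd r).div (hξ'd r) (hbne r hr)).hasDerivAt
  -- rewrite Condition (i)
  have hcond2 : Tendsto (fun r => deriv g r / max 1 (g r)) atTop (nhds 0) := by
    apply hcondi.congr'
    filter_upwards [eventually_gt_atTop 0] with r hr
    have hgr : 0 < g r := hgpos r hr
    have e1 : ξ r / deriv ξ r = g r := rfl
    have e2 : deriv ξ r / ξ r = (g r)⁻¹ := by
      rw [← e1]; exact (inv_div _ _).symm
    rw [e1, e2, minmax_eq hgr]
  have habs : ∀ δ : ℝ, 0 < δ → ∀ᶠ r in atTop, |deriv g r| ≤ δ * max 1 (g r) := by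
    intro δ hδ
    have h3 := Metric.tendsto_nhds.mp hcond2 δ hδ
    filter_upwards [h3] with r h1
    rw [Real.dist_eq, sub_zero, abs_div] at h1
    have hM : (0:ℝ) < max 1 (g r) := lt_of_lt_of_le one_pos (le_max_left _ _)
    rw [abs_of_pos hM, div_lt_iff₀ hM] at h1
    linarith
  -- ODE in the useful form
  have hDform : ∀ r, 0 < r → (1 + (φ r)^2) * (c - N * (deriv ξ r / ξ r) * φ r)
      = N * (1 + (φ r)^2) * (k * g r - φ r) / g r := by
    intro r hr
    have ha := (hξ_pos r hr).ne'
    have hb := hbne r hr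
    have e1 : g r = ξ r / deriv ξ r := rfl
    rw [hcNk, e1]
    field_simp
  -- main estimate
  have key : ∀ ε : ℝ, 0 < ε → ∀ᶠ r in atTop, |φ r - k * g r| ≤ ε := by
    intro ε hε
    have hm₁0 : 0 < min 1 (k^2/4) := lt_min one_pos (by positivity)
    have hmε0 : 0 < min ε 1 := lt_min hε one_pos
    have hδpos : 0 < N * min 1 (k^2/4) * min ε 1 / (4*(k+1)) :=
      div_pos (mul_pos (mul_pos hN0 hm₁0) hmε0) (by positivity)
    have hγpos : 0 < N * min 1 (k^2/4) * min ε 1 / 2 :=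
      div_pos (mul_pos (mul_pos hN0 hm₁0) hmε0) two_pos
    obtain ⟨r₀, hr₀⟩ := eventually_atTop.mp
      (habs (N * min 1 (k^2/4) * min ε 1 / (4*(k+1))) hδpos)
    set r₁ := max r₀ (max (R+1) 1) with hr₁def
    have hr₁R : ∀ r : ℝ, r₁ ≤ r → R < r := fun r hr => by
      have h2 : R + 1 ≤ r₁ := le_trans (le_max_left _ _) (le_max_right _ _)
      linarith
    have hr₁0 : ∀ r : ℝ, r₁ ≤ r → 0 < r := fun r hr => by
      have h2 : (1:ℝ) ≤ r₁ := le_trans (le_max_right _ _) (le_max_right _ _)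
      linarith
    have hr₁b : ∀ r : ℝ, r₁ ≤ r →
        |deriv g r| ≤ (N * min 1 (k^2/4) * min ε 1 / (4*(k+1))) * max 1 (g r) :=
      fun r hr => hr₀ r (le_trans (le_max_left _ _) hr)
    have hφd : ∀ r : ℝ, r₁ ≤ r →
        HasDerivAt φ (N * (1 + (φ r)^2) * (k * g r - φ r) / g r) r := fun r hr => by
      have h1 := hode r (hr₁R r hr)
      rwa [hDform r (hr₁0 r hr)] at h1
    -- Phase 1: φ eventually stays above k*g/2
    have hesc : ∃ b, r₁ ≤ b ∧ k * g b / 2 - φ b ≤ 0 := by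
      by_contra hcon
      push_neg at hcon
      refine riccati_blowup φ
        (fun r => N * (1 + (φ r)^2) * (k * g r - φ r) / g r) (half_pos hc) hφd ?_
      intro r hr
      have h1 : φ r ≤ k * g r / 2 := by linarith [hcon r hr]
      exact step_riccati hN1 hk (hgpos r (hr₁0 r hr)) hcNk h1
    obtain ⟨r₂, hr₂a, hr₂b⟩ := hesc
    have hstay : ∀ r, r₂ ≤ r → k * g r / 2 - φ r ≤ 0 := by
      refine barrier_stay (fun s => k * g s / 2 - φ s)
        (fun r => k * deriv g r / 2 - N * (1 + (φ r)^2) * (k * g r - φ r) / g r)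
        (fun r hr => ?_) hr₂b (fun r hr heq => ?_)
      · exact (((hgd r (hr₁0 r (hr₂a.trans hr))).const_mul k).div_const 2).sub
          (hφd r (hr₂a.trans hr))
      · exact step_touch hN1 hk hε (hgpos r (hr₁0 r (hr₂a.trans hr)))
          (hr₁b r (hr₂a.trans hr)) (by linarith)
    -- Phase 2: upper bound
    obtain ⟨r₃, hr₃a, hr₃b⟩ := eventually_le_of (fun s => φ s - k * g s)
      (fun r => N * (1 + (φ r)^2) * (k * g r - φ r) / g r - k * deriv g r) hγpos
      (fun r hr => (hφd r (hr₂a.trans hr)).sub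
        ((hgd r (hr₁0 r (hr₂a.trans hr))).const_mul k))
      (fun r hr hu => step_upper hN1 hk hε (hgpos r (hr₁0 r (hr₂a.trans hr)))
        (hr₁b r (hr₂a.trans hr)) hu)
    -- Phase 3: lower bound
    obtain ⟨r₄, hr₄a, hr₄b⟩ := eventually_le_of (fun s => k * g s - φ s)
      (fun r => k * deriv g r - N * (1 + (φ r)^2) * (k * g r - φ r) / g r) hγpos
      (fun r hr => ((hgd r (hr₁0 r (hr₂a.trans hr))).const_mul k).sub
        (hφd r (hr₂a.trans hr)))
      (fun r hr hl => step_lower hN1 hk hε (hgpos r (hr₁0 r (hr₂a.trans hr)))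
        (hr₁b r (hr₂a.trans hr)) (by linarith [hstay r hr]) hl)
    filter_upwards [eventually_ge_atTop (max r₃ r₄)] with r hr
    have h1 := hr₃b r (le_trans (le_max_left _ _) hr)
    have h2 := hr₄b r (le_trans (le_max_right _ _) hr)
    rw [abs_le]
    constructor <;> linarith
  -- conclude
  rw [Metric.tendsto_nhds]
  intro ε hε
  filter_upwards [key (ε/2) (half_pos hε)] with r hr
  rw [Real.dist_eq, sub_zero]
  have e1 : g r = ξ r / deriv ξ r := rfl
  rw [← e1]
  linarith
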